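/- arXiv:1505.07252 — 2 statements merged into one kernel-verified Lean document; each statement's English description precedes it below -/
import Mathlib

section
/- The fixed field of σ equals F₂(s): an element a ∈ F₂(t) satisfies σ(a) = a if and only if a lies in the subfield of F₂(t) generated by F₂ and s = (t³+t+1)/(t²+t). -/
/-!
The map `σ` cycles `t ↦ (t + 1) / t ↦ 1 / (t + 1) ↦ t`, so it has order three, and
`s = t + σ t + σ² t` is fixed by it. By Artin's theorem the fixed field of `⟨σ⟩` has index
`3` in `𝔽₂(t)`; since `t³ + t + 1` and `t² + t` are coprime, `[𝔽₂(t) : 𝔽₂(s)] = 3` as well, so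
`𝔽₂(s)`, which lies in the fixed field, is all of it.
-/

open scoped Polynomial RatFunc
open IntermediateField

namespace IntermediateField

variable {F E : Type*} [Field F] [Field E] [Algebra F E]

theorem mem_fixedField_zpowers_iff (g : E ≃ₐ[F] E) (x : E) :
    x ∈ fixedField (Subgroup.zpowers g) ↔ g x = x := by
  rw [mem_fixedField_iff]
  refine ⟨fun h ↦ h g (Subgroup.mem_zpowers g), fun h f hf ↦ ?_⟩
  exact (Subgroup.zpowers_le.mpr (MulAction.mem_stabilizer_iff.mpr h) hf :
    f ∈ MulAction.stabilizer _ x)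

theorem finrank_fixedField_eq_card' (H : Subgroup (E ≃ₐ[F] E)) [Finite H] :
    Module.finrank (fixedField H) E = Nat.card H := by
  have := Fintype.ofFinite H
  rw [Nat.card_eq_fintype_card]
  exact FixedPoints.finrank_eq_card H E

end IntermediateField

theorem IsCoprime.gcd_eq_one {R : Type*} [CommRing R] [IsBezout R] [IsDomain R]
    [NormalizedGCDMonoid R] {p q : R} (hpq : IsCoprime p q) : gcd p q = 1 := by
  rw [← normalize_gcd, normalize_eq_one]
  exact (gcd_isUnit_iff p q).mpr hpq

section ZModAlgEquiv

variable {n : ℕ} {A B : Type*} [Semiring A] [Semiring B] [Algebra (ZMod n) A] [Algebra (ZMod n) B]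

def RingEquiv.toZModAlgEquiv (σ : A ≃+* B) : A ≃ₐ[ZMod n] B :=
  AlgEquiv.ofRingEquiv fun c ↦
    RingHom.congr_fun (RingHom.ext_zmod ((σ : A →+* B).comp (algebraMap _ A)) (algebraMap _ B)) c

@[simp]
theorem RingEquiv.toZModAlgEquiv_apply (σ : A ≃+* B) (a : A) :
    σ.toZModAlgEquiv (n := n) a = σ a :=
  rfl

end ZModAlgEquiv

namespace RatFunc

variable {K : Type*} [Field K]

theorem algHom_ext {L : Type*} [Field L] [Algebra K L] {f g : K⟮X⟯ →ₐ[K] L} (h : f X = g X) :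
    f = g := by
  have hpoly : f.comp (IsScalarTower.toAlgHom K K[X] K⟮X⟯) =
      g.comp (IsScalarTower.toAlgHom K K[X] K⟮X⟯) :=
    Polynomial.algHom_ext (by simpa using h)
  exact AlgHom.coe_ringHom_injective <|
    IsFractionRing.ringHom_ext (A := K[X]) fun p ↦ AlgHom.congr_fun hpoly p

theorem X_add_one_ne_zero : (X + 1 : K⟮X⟯) ≠ 0 := by
  simpa using algebraMap_ne_zero (K := K) (Polynomial.X_add_C_ne_zero 1)

theorem X_sq_add_X_add_one_ne_zero : (X ^ 2 + X + 1 : K⟮X⟯) ≠ 0 := by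
  have hmonic : (Polynomial.X ^ 2 + Polynomial.X + 1 : K[X]).Monic := by monicity!
  simpa using algebraMap_ne_zero (K := K) hmonic.ne_zero

theorem num_div_eq_of_isCoprime {p q : K[X]} (hpq : IsCoprime p q) (hq : q.Monic) :
    num (algebraMap _ _ p / algebraMap _ _ q) = p := by
  classical
  simp [hpq.gcd_eq_one, hq.leadingCoeff]

theorem denom_div_eq_of_isCoprime {p q : K[X]} (hpq : IsCoprime p q) (hq : q.Monic) :
    denom (algebraMap _ _ p / algebraMap _ _ q) = q := by
  classical
  simp [denom_div _ hq.ne_zero, hpq.gcd_eq_one, hq.leadingCoeff]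

theorem finrank_adjoin_div_of_isCoprime {p q : K[X]} (hpq : IsCoprime p q) (hq : q.Monic) :
    Module.finrank K⟮algebraMap _ K⟮X⟯ p / algebraMap _ _ q⟯ K⟮X⟯ =
      max p.natDegree q.natDegree := by
  rw [finrank_eq_max_natDegree, num_div_eq_of_isCoprime hpq hq, denom_div_eq_of_isCoprime hpq hq]

end RatFunc

section

open RatFunc

theorem finrank_adjoin_s :
    Module.finrank (adjoin (ZMod 2) {((X ^ 3 + X + 1) / (X ^ 2 + X) : (ZMod 2)⟮X⟯)})
      (ZMod 2)⟮X⟯ = 3 := by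
  have hpq : IsCoprime (Polynomial.X ^ 3 + Polynomial.X + 1 : (ZMod 2)[X])
      (Polynomial.X ^ 2 + Polynomial.X) :=
    ⟨1, Polynomial.X + 1, by
      linear_combination (Polynomial.X ^ 3 + Polynomial.X ^ 2 + Polynomial.X) *
        CharTwo.two_eq_zero (R := (ZMod 2)[X])⟩
  have hs : ((X ^ 3 + X + 1) / (X ^ 2 + X) : (ZMod 2)⟮X⟯) =
      algebraMap (ZMod 2)[X] _ (Polynomial.X ^ 3 + Polynomial.X + 1) /
        algebraMap (ZMod 2)[X] _ (Polynomial.X ^ 2 + Polynomial.X) := by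
    simp
  have hp : (Polynomial.X ^ 3 + Polynomial.X + 1 : (ZMod 2)[X]).natDegree = 3 := by
    compute_degree!
  have hq : (Polynomial.X ^ 2 + Polynomial.X : (ZMod 2)[X]).natDegree = 2 := by
    compute_degree!
  rw [hs, finrank_adjoin_div_of_isCoprime hpq (by monicity!), hp, hq]
  rfl

variable {σ : (ZMod 2)⟮X⟯ ≃+* (ZMod 2)⟮X⟯} (hX : σ X = (X + 1) / X)
include hX

theorem apply_X_eq_one_add_inv : σ X = 1 + X⁻¹ := by
  rw [hX, add_div, div_self X_ne_zero, one_div]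

theorem apply_apply_X : σ (σ X) = (X + 1)⁻¹ := by
  rw [apply_X_eq_one_add_inv hX, map_add, map_one, map_inv₀, apply_X_eq_one_add_inv hX]
  field_simp [X_ne_zero, X_add_one_ne_zero]
  linear_combination (X : (ZMod 2)⟮X⟯) * CharTwo.two_eq_zero (R := (ZMod 2)⟮X⟯)

theorem apply_apply_apply_X : σ (σ (σ X)) = X := by
  rw [apply_apply_X hX, map_inv₀, map_add, map_one, apply_X_eq_one_add_inv hX, add_right_comm,
    CharTwo.add_self_eq_zero, zero_add, inv_inv]

theorem apply_X_ne_X : σ X ≠ X := by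
  rw [hX, Ne, div_eq_iff X_ne_zero]
  intro h
  exact X_sq_add_X_add_one_ne_zero <| by
    linear_combination -h + (X + 1 : (ZMod 2)⟮X⟯) * CharTwo.two_eq_zero (R := (ZMod 2)⟮X⟯)

theorem apply_s : σ ((X ^ 3 + X + 1) / (X ^ 2 + X)) = (X ^ 3 + X + 1) / (X ^ 2 + X) := by
  have hnum : (1 + X⁻¹) ^ 3 + (1 + X⁻¹) + 1 = (X ^ 3 + X + 1 : (ZMod 2)⟮X⟯) / X ^ 3 := by
    field_simp [X_ne_zero]
    linear_combination (X ^ 3 + 2 * X ^ 2 + X : (ZMod 2)⟮X⟯) *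
      CharTwo.two_eq_zero (R := (ZMod 2)⟮X⟯)
  have hden : (1 + X⁻¹) ^ 2 + (1 + X⁻¹) = (X + 1 : (ZMod 2)⟮X⟯) / X ^ 2 := by
    field_simp [X_ne_zero]
    linear_combination (X ^ 2 + X : (ZMod 2)⟮X⟯) * CharTwo.two_eq_zero (R := (ZMod 2)⟮X⟯)
  simp only [map_div₀, map_add, map_pow, map_one, apply_X_eq_one_add_inv hX, hnum, hden]
  field_simp [X_ne_zero, X_add_one_ne_zero]

theorem orderOf_toZModAlgEquiv_eq_three : orderOf (σ.toZModAlgEquiv (n := 2)) = 3 := by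
  apply orderOf_eq_prime
  · apply AlgEquiv.coe_toAlgHom_injective
    apply RatFunc.algHom_ext
    simpa [pow_succ] using apply_apply_apply_X hX
  · intro h
    exact apply_X_ne_X hX (by simpa using AlgEquiv.congr_fun h X)

end

theorem fixed_field_eq_adjoin_s_general
    (σ : RatFunc (ZMod 2) ≃+* RatFunc (ZMod 2))
    (hX : σ RatFunc.X = (RatFunc.X + 1) / RatFunc.X)
    (s : RatFunc (ZMod 2))
    (hs : s = (RatFunc.X ^ 3 + RatFunc.X + 1) / (RatFunc.X ^ 2 + RatFunc.X))
    (a : RatFunc (ZMod 2)) :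
    σ a = a ↔ a ∈ IntermediateField.adjoin (ZMod 2) {s} := by
  set τ := σ.toZModAlgEquiv (n := 2)
  have hτ : orderOf τ = 3 := orderOf_toZModAlgEquiv_eq_three hX
  have : Finite (Subgroup.zpowers τ) := (orderOf_pos_iff.mp (hτ ▸ three_pos)).finite_zpowers
  have hfinrank : Module.finrank (adjoin (ZMod 2) {s}) (RatFunc (ZMod 2)) = 3 :=
    hs ▸ finrank_adjoin_s
  have : FiniteDimensional (adjoin (ZMod 2) {s}) (RatFunc (ZMod 2)) :=
    Module.finite_of_finrank_eq_succ hfinrank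
  have hs_fixed : s ∈ fixedField (Subgroup.zpowers τ) :=
    (mem_fixedField_zpowers_iff τ s).mpr (hs ▸ apply_s hX)
  have hE : adjoin (ZMod 2) {s} = fixedField (Subgroup.zpowers τ) :=
    eq_of_le_of_finrank_eq' (adjoin_simple_le_iff.mpr hs_fixed) <| by
      rw [hfinrank, finrank_fixedField_eq_card', Nat.card_zpowers, hτ]
  rw [hE, mem_fixedField_zpowers_iff]
  rfl

/-- The fixed field of `σ` equals `𝔽₂(s)`: an element `a ∈ 𝔽₂(t)`
satisfies `σ(a) = a` if and only if `a` lies in the subfield of `𝔽₂(t)` generated by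
`𝔽₂` and `s = (t³+t+1)/(t²+t)`.  Here `σ` is the `𝔽₂`-algebra automorphism of
`𝔽₂(t)` determined by `σ(t) = (t+1)/t`. -/
theorem fixed_field_eq_adjoin_s
    (σ : RatFunc (ZMod 2) ≃+* RatFunc (ZMod 2))
    (hfix : ∀ c : ZMod 2, σ (RatFunc.C c) = RatFunc.C c)
    (hX : σ RatFunc.X = (RatFunc.X + 1) / RatFunc.X)
    (s : RatFunc (ZMod 2))
    (hs : s = (RatFunc.X ^ 3 + RatFunc.X + 1) / (RatFunc.X ^ 2 + RatFunc.X))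
    (a : RatFunc (ZMod 2)) :
    σ a = a ↔ a ∈ IntermediateField.adjoin (ZMod 2) {s} :=
  fixed_field_eq_adjoin_s_general σ hX s hs a
end

section
/- The element x² + t² + t is central in R' = F₂(t)[x;σ'] with σ'(t) = t+1: it commutes with every element of R'. In particular it is a (central) common two-sided multiple, i.e. a bound, of x + t and x + t + 1. -/
noncomputable section

/-- Left multiplication by the skew variable `x` of the Ore extension `F[x;σ]`
(with zero derivation), as an additive endomorphism of the space `ℕ →₀ F` of
coefficient sequences: it twists all coefficients by `σ` and shifts degrees up by one. -/
def OreX {F : Type*} [Field F] (σ : F →+* F) : AddMonoid.End (ℕ →₀ F) :=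
  (Finsupp.mapDomain.addMonoidHom (· + 1)).comp
    (Finsupp.mapRange.addMonoidHom σ.toAddMonoidHom)

/-- The skew (Ore) polynomial ring `F[x;σ]` with zero derivation, realized concretely
(via its faithful left regular representation) as the subring of `AddMonoid.End (ℕ →₀ F)`
generated by the left multiplications by constants together with left multiplication
by `x`.  Its elements are exactly the maps `∑ i, aᵢ σⁱ(·) xⁱ`, and inside it the
defining commutation rule `x * a = σ a * x` holds. -/
def OreRing {F : Type*} [Field F] (σ : F →+* F) : Subring (AddMonoid.End (ℕ →₀ F)) :=
  Subring.closure (Set.range (Module.toAddMonoidEnd F (ℕ →₀ F)) ∪ {OreX σ})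

/-- The embedding of the coefficient field `F` into the skew polynomial ring `F[x;σ]`. -/
def OreC {F : Type*} [Field F] (σ : F →+* F) : F →+* OreRing σ :=
  (Module.toAddMonoidEnd F (ℕ →₀ F)).codRestrict (OreRing σ) fun a =>
    Subring.subset_closure (Or.inl ⟨a, rfl⟩)

/-- The skew variable `x` of the skew polynomial ring `F[x;σ]`. -/
def Orex {F : Type*} [Field F] (σ : F →+* F) : OreRing σ :=
  ⟨OreX σ, Subring.subset_closure (Or.inr rfl)⟩

lemma OreX_mul_smul {F : Type*} [Field F] (σ : F →+* F) (a : F) :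
    OreX σ * Module.toAddMonoidEnd F (ℕ →₀ F) a =
      Module.toAddMonoidEnd F (ℕ →₀ F) (σ a) * OreX σ := by
  refine AddMonoidHom.ext fun f => ?_
  show OreX σ (a • f) = σ a • OreX σ f
  have h1 : Finsupp.mapRange (σ : F → F) (map_zero σ) (a • f)
      = σ a • Finsupp.mapRange (σ : F → F) (map_zero σ) f := by
    ext i
    simp [Finsupp.mapRange_apply, map_mul]
  show Finsupp.mapDomain (· + 1) (Finsupp.mapRange σ (map_zero σ) (a • f))
      = σ a • Finsupp.mapDomain (· + 1) (Finsupp.mapRange σ (map_zero σ) f)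
  rw [h1, Finsupp.mapDomain_smul]

lemma Orex_mul_OreC {F : Type*} [Field F] (σ : F →+* F) (a : F) :
    Orex σ * OreC σ a = OreC σ (σ a) * Orex σ :=
  Subtype.ext (OreX_mul_smul σ a)

set_option maxHeartbeats 1000000 in
set_option synthInstance.maxHeartbeats 1000000 in
/-- The element `x² + t² + t` is central in `R' = 𝔽₂(t)[x;σ']` with
`σ'(t) = t+1`: it commutes with every element of `R'`.  In particular it is a
(central) common two-sided multiple, i.e. a bound, of `x + t` and `x + t + 1`. -/
theorem shift_case_central_bound
    (σ : RatFunc (ZMod 2) ≃+* RatFunc (ZMod 2))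
    (hfix : ∀ c : ZMod 2, σ (RatFunc.C c) = RatFunc.C c)
    (hX : σ RatFunc.X = RatFunc.X + 1)
    (c : OreRing σ.toRingHom)
    (hc : c = Orex σ.toRingHom ^ 2 + OreC σ.toRingHom (RatFunc.X ^ 2 + RatFunc.X)) :
    (∀ y : OreRing σ.toRingHom, c * y = y * c) ∧
      (∃ a : OreRing σ.toRingHom,
        c = a * (Orex σ.toRingHom + OreC σ.toRingHom RatFunc.X)) ∧
      (∃ b : OreRing σ.toRingHom,
        c = b * (Orex σ.toRingHom + OreC σ.toRingHom (RatFunc.X + 1))) := by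
  have hone : (1 : RatFunc (ZMod 2)) + 1 = 0 := by
    rw [← map_one RatFunc.C, ← map_add, show (1 : ZMod 2) + 1 = 0 by decide, map_zero]
  have hσX : σ.toRingHom RatFunc.X = RatFunc.X + 1 := hX
  have hσC : ∀ a : ZMod 2, σ.toRingHom (RatFunc.C a) = RatFunc.C a := hfix
  have hσX1 : σ.toRingHom (RatFunc.X + 1) = RatFunc.X := by
    rw [map_add, map_one, hσX]
    linear_combination hone
  have hσσ : ∀ a : RatFunc (ZMod 2), σ.toRingHom (σ.toRingHom a) = a := by
    have hid : σ.toRingHom.comp σ.toRingHom = RingHom.id (RatFunc (ZMod 2)) := by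
      refine IsLocalization.ringHom_ext (nonZeroDivisors (Polynomial (ZMod 2))) ?_
      refine Polynomial.ringHom_ext (fun a => ?_) ?_
      · simp [RatFunc.algebraMap_C, hfix]
      · simp only [RingHom.comp_apply, RingHom.id_apply, RatFunc.algebraMap_X,
          RingEquiv.coe_toRingHom]
        rw [hσX, hσX1]
    exact fun a => RingHom.congr_fun hid a
  have hσt2 : σ.toRingHom (RatFunc.X ^ 2 + RatFunc.X) = RatFunc.X ^ 2 + RatFunc.X := by
    rw [map_add, map_pow, hσX]
    linear_combination (RatFunc.X + 1) * hone
  subst hc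
  have hcc : ((Orex σ.toRingHom ^ 2 + OreC σ.toRingHom (RatFunc.X ^ 2 + RatFunc.X) :
        OreRing σ.toRingHom) : AddMonoid.End (ℕ →₀ RatFunc (ZMod 2))) =
      OreX σ.toRingHom * OreX σ.toRingHom
        + Module.toAddMonoidEnd (RatFunc (ZMod 2)) (ℕ →₀ RatFunc (ZMod 2)) (RatFunc.X ^ 2 + RatFunc.X) := by
    rw [sq]; rfl
  have hAcomm : ∀ a : RatFunc (ZMod 2),
      Commute ((Orex σ.toRingHom ^ 2 + OreC σ.toRingHom (RatFunc.X ^ 2 + RatFunc.X) :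
          OreRing σ.toRingHom) : AddMonoid.End (ℕ →₀ RatFunc (ZMod 2)))
        (Module.toAddMonoidEnd (RatFunc (ZMod 2)) (ℕ →₀ RatFunc (ZMod 2)) a) := by
    intro a
    have h2 : (OreX σ.toRingHom * OreX σ.toRingHom) * Module.toAddMonoidEnd (RatFunc (ZMod 2)) (ℕ →₀ RatFunc (ZMod 2)) a
        = Module.toAddMonoidEnd (RatFunc (ZMod 2)) (ℕ →₀ RatFunc (ZMod 2)) a * (OreX σ.toRingHom * OreX σ.toRingHom) := by
      calc (OreX σ.toRingHom * OreX σ.toRingHom) * Module.toAddMonoidEnd (RatFunc (ZMod 2)) (ℕ →₀ RatFunc (ZMod 2)) a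
          = OreX σ.toRingHom * (OreX σ.toRingHom * Module.toAddMonoidEnd (RatFunc (ZMod 2)) (ℕ →₀ RatFunc (ZMod 2)) a) :=
            mul_assoc _ _ _
        _ = OreX σ.toRingHom * (Module.toAddMonoidEnd (RatFunc (ZMod 2)) (ℕ →₀ RatFunc (ZMod 2)) (σ.toRingHom a) * OreX σ.toRingHom) := by
            rw [OreX_mul_smul]
        _ = (OreX σ.toRingHom * Module.toAddMonoidEnd (RatFunc (ZMod 2)) (ℕ →₀ RatFunc (ZMod 2)) (σ.toRingHom a)) * OreX σ.toRingHom :=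
            (mul_assoc _ _ _).symm
        _ = (Module.toAddMonoidEnd (RatFunc (ZMod 2)) (ℕ →₀ RatFunc (ZMod 2)) (σ.toRingHom (σ.toRingHom a)) * OreX σ.toRingHom)
              * OreX σ.toRingHom := by rw [OreX_mul_smul]
        _ = Module.toAddMonoidEnd (RatFunc (ZMod 2)) (ℕ →₀ RatFunc (ZMod 2)) a * (OreX σ.toRingHom * OreX σ.toRingHom) := by
            rw [hσσ, mul_assoc]
    have h3 : Module.toAddMonoidEnd (RatFunc (ZMod 2)) (ℕ →₀ RatFunc (ZMod 2))
          (RatFunc.X ^ 2 + RatFunc.X) * Module.toAddMonoidEnd (RatFunc (ZMod 2)) (ℕ →₀ RatFunc (ZMod 2)) a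
        = Module.toAddMonoidEnd (RatFunc (ZMod 2)) (ℕ →₀ RatFunc (ZMod 2)) a
          * Module.toAddMonoidEnd (RatFunc (ZMod 2)) (ℕ →₀ RatFunc (ZMod 2)) (RatFunc.X ^ 2 + RatFunc.X) := by
      rw [← map_mul, ← map_mul, mul_comm]
    show _ = _
    rw [hcc, add_mul, mul_add, h2, h3]
  have hXcomm :
      Commute ((Orex σ.toRingHom ^ 2 + OreC σ.toRingHom (RatFunc.X ^ 2 + RatFunc.X) :
          OreRing σ.toRingHom) : AddMonoid.End (ℕ →₀ RatFunc (ZMod 2)))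
        (OreX σ.toRingHom) := by
    show _ = _
    rw [hcc, add_mul, mul_add, mul_assoc,
      ← mul_assoc (OreX σ.toRingHom) (OreX σ.toRingHom) (OreX σ.toRingHom),
      OreX_mul_smul, hσt2]
  have expand : ∀ u v : RatFunc (ZMod 2),
      (Orex σ.toRingHom + OreC σ.toRingHom u) * (Orex σ.toRingHom + OreC σ.toRingHom v)
        = Orex σ.toRingHom * Orex σ.toRingHom
          + (OreC σ.toRingHom (σ.toRingHom v) * Orex σ.toRingHom
            + OreC σ.toRingHom u * Orex σ.toRingHom)
          + OreC σ.toRingHom (u * v) := by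
    intro u v
    rw [add_mul, mul_add, mul_add, Orex_mul_OreC, map_mul]
    abel
  refine ⟨fun y => ?_, ?_, ?_⟩
  · refine Subtype.ext ?_
    simp only [MulMemClass.coe_mul]
    refine Subring.closure_induction
      (p := fun z _ =>
        Commute ((Orex σ.toRingHom ^ 2 + OreC σ.toRingHom (RatFunc.X ^ 2 + RatFunc.X) :
          OreRing σ.toRingHom) : AddMonoid.End (ℕ →₀ RatFunc (ZMod 2))) z)
      ?_ (Commute.zero_right _) (Commute.one_right _)
      (fun u v _ _ hu hv => hu.add_right hv)
      (fun u _ hu => hu.neg_right)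
      (fun u v _ _ hu hv => hu.mul_right hv) y.2
    rintro z (⟨a, rfl⟩ | rfl)
    · exact hAcomm a
    · exact hXcomm
  · refine ⟨Orex σ.toRingHom + OreC σ.toRingHom (RatFunc.X + 1), ?_⟩
    rw [expand, hσX,
      show (RatFunc.X + 1) * RatFunc.X = RatFunc.X ^ 2 + RatFunc.X by ring,
      ← add_mul, ← map_add,
      show (RatFunc.X + 1) + (RatFunc.X + 1) = (0 : RatFunc (ZMod 2)) by
        linear_combination (RatFunc.X + 1) * hone,
      map_zero, zero_mul, add_zero, sq]
  · refine ⟨Orex σ.toRingHom + OreC σ.toRingHom RatFunc.X, ?_⟩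
    rw [expand, hσX1,
      show RatFunc.X * (RatFunc.X + 1) = RatFunc.X ^ 2 + RatFunc.X by ring,
      ← add_mul, ← map_add,
      show RatFunc.X + RatFunc.X = (0 : RatFunc (ZMod 2)) by
        linear_combination RatFunc.X * hone,
      map_zero, zero_mul, add_zero, sq]
end
end
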